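/- arXiv:2309.04636 — 8 statements merged into one kernel-verified Lean document; each statement's English description precedes it below -/
import Mathlib

section
/- Let n ≥ 1 and let R be a curvature-type tensor and T a torsion-type tensor on an n-dimensional Hermitian vector space satisfying the pluriclosed Bianchi symmetry: for all indices α, β, γ, δ, R α β γ δ − R γ β α δ − R α δ γ β + R γ δ α β = ∑_ρ T α γ ρ · conj (T β δ ρ). Then for every matrix ξ : Matrix (Fin n) (Fin n) ℂ, one has ∑_{α,β,γ,δ} (R α β γ δ − (1/4) · ∑_ρ T α γ ρ · conj (T β δ ρ)) · ξ α β · ξ γ δ = (1/2) · ∑_{α,β,γ,δ} (R α β γ δ + R α δ γ β) · ξ α β · ξ γ δ. That is, the tempered real bisectional curvature quadratic form at parameter τ = 0 equals one half of the altered holomorphic sectional curvature quadratic form. -/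
private lemma sum4_swap {n : ℕ} (f : Fin n → Fin n → Fin n → Fin n → ℂ) :
    (∑ α : Fin n, ∑ β : Fin n, ∑ γ : Fin n, ∑ δ : Fin n, f α β γ δ)
      = ∑ α : Fin n, ∑ β : Fin n, ∑ γ : Fin n, ∑ δ : Fin n, f γ δ α β := by
  rw [show (∑ α : Fin n, ∑ β : Fin n, ∑ γ : Fin n, ∑ δ : Fin n, f α β γ δ)
      = ∑ p : (Fin n × Fin n) × (Fin n × Fin n), f p.1.1 p.1.2 p.2.1 p.2.2 by
    simp [Fintype.sum_prod_type]]
  rw [show (∑ α : Fin n, ∑ β : Fin n, ∑ γ : Fin n, ∑ δ : Fin n, f γ δ α β)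
      = ∑ p : (Fin n × Fin n) × (Fin n × Fin n), f p.2.1 p.2.2 p.1.1 p.1.2 by
    simp [Fintype.sum_prod_type]]
  exact Fintype.sum_equiv (Equiv.prodComm _ _) _ _ (fun p => rfl)

/-- Algebraic core of Lemma 2.3: for a pluriclosed (Bianchi-symmetric) curvature/torsion
pair, the tempered real bisectional curvature form at `τ = 0` equals one half of the
altered holomorphic sectional curvature form. -/
theorem tempered_RBC_eq_half_altered_HSC (n : ℕ) (hn : 1 ≤ n)
    (R : Fin n → Fin n → Fin n → Fin n → ℂ)
    (T : Fin n → Fin n → Fin n → ℂ)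
    (hB : ∀ α β γ δ : Fin n,
      R α β γ δ - R γ β α δ - R α δ γ β + R γ δ α β
        = ∑ ρ : Fin n, T α γ ρ * (starRingEnd ℂ) (T β δ ρ)) :
    ∀ ξ : Matrix (Fin n) (Fin n) ℂ,
      (∑ α : Fin n, ∑ β : Fin n, ∑ γ : Fin n, ∑ δ : Fin n,
        (R α β γ δ - (1/4 : ℂ) * ∑ ρ : Fin n, T α γ ρ * (starRingEnd ℂ) (T β δ ρ))
          * ξ α β * ξ γ δ)
      = (1/2 : ℂ) * ∑ α : Fin n, ∑ β : Fin n, ∑ γ : Fin n, ∑ δ : Fin n,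
          (R α β γ δ + R α δ γ β) * ξ α β * ξ γ δ := by
  intro ξ
  have h1 : (∑ α : Fin n, ∑ β : Fin n, ∑ γ : Fin n, ∑ δ : Fin n,
      R γ δ α β * (ξ α β * ξ γ δ))
      = ∑ α : Fin n, ∑ β : Fin n, ∑ γ : Fin n, ∑ δ : Fin n,
        R α β γ δ * (ξ α β * ξ γ δ) := by
    rw [sum4_swap (fun α β γ δ => R γ δ α β * (ξ α β * ξ γ δ))]
    refine Finset.sum_congr rfl fun _ _ => Finset.sum_congr rfl fun _ _ =>
      Finset.sum_congr rfl fun _ _ => Finset.sum_congr rfl fun _ _ => by ring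
  have h2 : (∑ α : Fin n, ∑ β : Fin n, ∑ γ : Fin n, ∑ δ : Fin n,
      R γ β α δ * (ξ α β * ξ γ δ))
      = ∑ α : Fin n, ∑ β : Fin n, ∑ γ : Fin n, ∑ δ : Fin n,
        R α δ γ β * (ξ α β * ξ γ δ) := by
    rw [sum4_swap (fun α β γ δ => R γ β α δ * (ξ α β * ξ γ δ))]
    refine Finset.sum_congr rfl fun _ _ => Finset.sum_congr rfl fun _ _ =>
      Finset.sum_congr rfl fun _ _ => Finset.sum_congr rfl fun _ _ => by ring
  simp only [← hB]
  simp only [sub_mul, add_mul, mul_sub, mul_add, mul_assoc, Finset.sum_sub_distrib,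
    Finset.sum_add_distrib, ← Finset.mul_sum]
  rw [h1, h2]
  ring
end

section
/- Let n ≥ 1 and let R be a curvature-type tensor and T a torsion-type tensor on an n-dimensional Hermitian vector space satisfying the pluriclosed Bianchi symmetry: for all α, β, γ, δ, R α β γ δ − R γ β α δ − R α δ γ β + R γ δ α β = ∑_ρ T α γ ρ · conj (T β δ ρ). If for every nonzero Hermitian positive semidefinite matrix ξ : Matrix (Fin n) (Fin n) ℂ the real part of ∑_{α,β,γ,δ} (R α β γ δ + R α δ γ β) · ξ α β · ξ γ δ is strictly negative, then for every nonzero Hermitian positive semidefinite ξ the real part of ∑_{α,β,γ,δ} (R α β γ δ − (1/4) ∑_ρ T α γ ρ · conj (T β δ ρ)) · ξ α β · ξ γ δ is also strictly negative. (That is, for a pluriclosed metric, negativity of the altered holomorphic sectional curvature implies negativity of the tempered real bisectional curvature at τ = 0.) -/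
open scoped ComplexOrder

/-- Lemma 2.3: for a pluriclosed (Bianchi-symmetric) curvature/torsion pair, negativity of
the altered holomorphic sectional curvature implies negativity of the tempered real
bisectional curvature at `τ = 0`. -/
theorem altered_HSC_neg_implies_tempered_RBC_neg (n : ℕ) (hn : 1 ≤ n)
    (R : Fin n → Fin n → Fin n → Fin n → ℂ)
    (T : Fin n → Fin n → Fin n → ℂ)
    (hB : ∀ α β γ δ : Fin n,
      R α β γ δ - R γ β α δ - R α δ γ β + R γ δ α β
        = ∑ ρ : Fin n, T α γ ρ * (starRingEnd ℂ) (T β δ ρ))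
    (hneg : ∀ ξ : Matrix (Fin n) (Fin n) ℂ, ξ ≠ 0 → ξ.PosSemidef →
      (∑ α : Fin n, ∑ β : Fin n, ∑ γ : Fin n, ∑ δ : Fin n,
        (R α β γ δ + R α δ γ β) * ξ α β * ξ γ δ).re < 0) :
    ∀ ξ : Matrix (Fin n) (Fin n) ℂ, ξ ≠ 0 → ξ.PosSemidef →
      (∑ α : Fin n, ∑ β : Fin n, ∑ γ : Fin n, ∑ δ : Fin n,
        (R α β γ δ - (1/4 : ℂ) * ∑ ρ : Fin n, T α γ ρ * (starRingEnd ℂ) (T β δ ρ))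
          * ξ α β * ξ γ δ).re < 0 := by
  intro ξ hξ hpsd
  -- swapping the pair (α,β) with (γ,δ) in a quadruple sum
  have swap4 : ∀ f : Fin n → Fin n → Fin n → Fin n → ℂ,
      (∑ α : Fin n, ∑ β : Fin n, ∑ γ : Fin n, ∑ δ : Fin n, f α β γ δ)
        = ∑ α : Fin n, ∑ β : Fin n, ∑ γ : Fin n, ∑ δ : Fin n, f γ δ α β := by
    intro f
    calc (∑ α : Fin n, ∑ β : Fin n, ∑ γ : Fin n, ∑ δ : Fin n, f α β γ δ)
        = ∑ p : Fin n × Fin n, ∑ q : Fin n × Fin n, f p.1 p.2 q.1 q.2 := by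
          simp [Fintype.sum_prod_type]
      _ = ∑ q : Fin n × Fin n, ∑ p : Fin n × Fin n, f p.1 p.2 q.1 q.2 :=
          Finset.sum_comm
      _ = _ := by simp [Fintype.sum_prod_type]
  set S1 := ∑ α : Fin n, ∑ β : Fin n, ∑ γ : Fin n, ∑ δ : Fin n,
      R α β γ δ * ξ α β * ξ γ δ with hS1
  set S3 := ∑ α : Fin n, ∑ β : Fin n, ∑ γ : Fin n, ∑ δ : Fin n,
      R α δ γ β * ξ α β * ξ γ δ with hS3
  set Q := ∑ α : Fin n, ∑ β : Fin n, ∑ γ : Fin n, ∑ δ : Fin n,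
      (∑ ρ : Fin n, T α γ ρ * (starRingEnd ℂ) (T β δ ρ)) * ξ α β * ξ γ δ with hQ
  have h2 : (∑ α : Fin n, ∑ β : Fin n, ∑ γ : Fin n, ∑ δ : Fin n,
      R γ β α δ * ξ α β * ξ γ δ) = S3 := by
    rw [swap4 (fun α β γ δ => R γ β α δ * ξ α β * ξ γ δ)]
    exact Finset.sum_congr rfl fun α _ => Finset.sum_congr rfl fun β _ =>
      Finset.sum_congr rfl fun γ _ => Finset.sum_congr rfl fun δ _ => by ring
  have h4 : (∑ α : Fin n, ∑ β : Fin n, ∑ γ : Fin n, ∑ δ : Fin n,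
      R γ δ α β * ξ α β * ξ γ δ) = S1 := by
    rw [swap4 (fun α β γ δ => R γ δ α β * ξ α β * ξ γ δ)]
    exact Finset.sum_congr rfl fun α _ => Finset.sum_congr rfl fun β _ =>
      Finset.sum_congr rfl fun γ _ => Finset.sum_congr rfl fun δ _ => by ring
  have hBsum : (∑ α : Fin n, ∑ β : Fin n, ∑ γ : Fin n, ∑ δ : Fin n,
      (R α β γ δ - R γ β α δ - R α δ γ β + R γ δ α β) * ξ α β * ξ γ δ) = Q := by
    exact Finset.sum_congr rfl fun α _ => Finset.sum_congr rfl fun β _ =>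
      Finset.sum_congr rfl fun γ _ => Finset.sum_congr rfl fun δ _ => by rw [hB]
  simp only [sub_mul, add_mul, Finset.sum_sub_distrib, Finset.sum_add_distrib] at hBsum
  rw [h2, h4, ← hS1, ← hS3] at hBsum
  -- hBsum : S1 - S3 - S3 + S1 = Q
  have hgoal : (∑ α : Fin n, ∑ β : Fin n, ∑ γ : Fin n, ∑ δ : Fin n,
      (R α β γ δ - (1/4 : ℂ) * ∑ ρ : Fin n, T α γ ρ * (starRingEnd ℂ) (T β δ ρ))
        * ξ α β * ξ γ δ) = (1/2 : ℂ) * (S1 + S3) := by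
    have expand : (∑ α : Fin n, ∑ β : Fin n, ∑ γ : Fin n, ∑ δ : Fin n,
        (R α β γ δ - (1/4 : ℂ) * ∑ ρ : Fin n, T α γ ρ * (starRingEnd ℂ) (T β δ ρ))
          * ξ α β * ξ γ δ)
        = S1 - (1/4 : ℂ) * Q := by
      rw [hS1, hQ, Finset.mul_sum, ← Finset.sum_sub_distrib]
      refine Finset.sum_congr rfl fun α _ => ?_
      rw [Finset.mul_sum, ← Finset.sum_sub_distrib]
      refine Finset.sum_congr rfl fun β _ => ?_
      rw [Finset.mul_sum, ← Finset.sum_sub_distrib]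
      refine Finset.sum_congr rfl fun γ _ => ?_
      rw [Finset.mul_sum, ← Finset.sum_sub_distrib]
      exact Finset.sum_congr rfl fun δ _ => by ring
    rw [expand]
    linear_combination (1/4 : ℂ) * hBsum
  rw [hgoal]
  have hne := hneg ξ hξ hpsd
  have hs : (∑ α : Fin n, ∑ β : Fin n, ∑ γ : Fin n, ∑ δ : Fin n,
      (R α β γ δ + R α δ γ β) * ξ α β * ξ γ δ) = S1 + S3 := by
    simp only [add_mul, Finset.sum_add_distrib, ← hS1, ← hS3]
  rw [hs] at hne
  have : ((1/2 : ℂ) * (S1 + S3)).re = (1/2 : ℝ) * (S1 + S3).re := by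
    simp [Complex.mul_re]
  rw [this]
  linarith
end

section
/- Let n ≥ 1, let τ, κ₀ be real numbers, let R be a curvature-type tensor, and let T be a torsion-type tensor that is antisymmetric in its first two arguments (T i k r = − T k i r for all i, k, r). Suppose that for every Hermitian positive semidefinite matrix ξ : Matrix (Fin n) (Fin n) ℂ one has ∑_{i,j,k,l} (R i j k l − ((1−τ)/4) · ∑_r T i k r · conj (T j l r)) · ξ i j · ξ k l = κ₀ · ∑_{i,j} ξ i j · ξ j i. Then for all indices i, j, k, l: R i j k l + R k l i j = 2 κ₀ · (if i = l ∧ k = j then 1 else 0) + ((1−τ)/2) · ∑_r T i k r · conj (T j l r). -/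
open scoped ComplexOrder
open Finset

/-!
The quadratic form `ξ ↦ ∑ Q i j k l ξ i j ξ k l` of the tempered tensor
`Q = R - (1 - τ)/4 · T ⊗ T̄` agrees with `κ₀ |ξ|²` on the cone of positive semidefinite
matrices. Since that cone is closed under addition, the symmetrized bilinear forms agree on pairs
of positive semidefinite matrices, and since it spans all matrices, they agree everywhere.
Evaluating on matrix units gives the identity, where antisymmetry of `T` makes the torsion term
symmetric under `(i, j) ↔ (k, l)`.
-/

open scoped MatrixOrder Matrix.Norms.L2Operator in
theorem Matrix.span_posSemidef (ι : Type*) [Fintype ι] [DecidableEq ι] :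
    Submodule.span ℂ {A : Matrix ι ι ℂ | A.PosSemidef} = ⊤ := by
  simpa only [Matrix.nonneg_iff_posSemidef] using CStarAlgebra.span_nonneg (A := Matrix ι ι ℂ)

section TensorPairing

variable {ι : Type*} [Fintype ι]

/-- The bilinear form `(ξ, η) ↦ A_{i j̄ k l̄} ξ^{i j̄} η^{k l̄}` of a curvature-type tensor. -/
def tensorPairing (A : ι → ι → ι → ι → ℂ) : Matrix ι ι ℂ →ₗ[ℂ] Matrix ι ι ℂ →ₗ[ℂ] ℂ :=
  LinearMap.mk₂ ℂ (fun ξ η => ∑ i, ∑ j, ∑ k, ∑ l, A i j k l * ξ i j * η k l)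
    (fun _ _ _ => by simp only [Matrix.add_apply, mul_add, add_mul, sum_add_distrib])
    (fun _ _ _ => by simp only [Matrix.smul_apply, smul_eq_mul, mul_sum, mul_assoc, mul_left_comm])
    (fun _ _ _ => by simp only [Matrix.add_apply, mul_add, sum_add_distrib])
    (fun _ _ _ => by simp only [Matrix.smul_apply, smul_eq_mul, mul_sum, mul_assoc, mul_left_comm])

theorem tensorPairing_apply (A : ι → ι → ι → ι → ℂ) (ξ η : Matrix ι ι ℂ) :
    tensorPairing A ξ η = ∑ i, ∑ j, ∑ k, ∑ l, A i j k l * ξ i j * η k l :=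
  rfl

theorem tensorPairing_single [DecidableEq ι] (A : ι → ι → ι → ι → ℂ) (i j k l : ι) :
    tensorPairing A (Matrix.single i j 1) (Matrix.single k l 1) = A i j k l := by
  simp [tensorPairing_apply, Matrix.single_apply, ite_and]

theorem tensorPairing_swap (A : ι → ι → ι → ι → ℂ) (ξ η : Matrix ι ι ℂ) :
    tensorPairing (fun i j k l => A k l i j) ξ η = tensorPairing A η ξ := by
  rw [tensorPairing_apply, tensorPairing_apply, sum_comm_cycle]
  refine sum_congr rfl fun _ _ => ?_
  rw [sum_comm_cycle]
  simp only [mul_right_comm]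

theorem tensorPairing_add (A B : ι → ι → ι → ι → ℂ) (ξ η : Matrix ι ι ℂ) :
    tensorPairing (fun i j k l => A i j k l + B i j k l) ξ η
      = tensorPairing A ξ η + tensorPairing B ξ η := by
  simp only [tensorPairing_apply, add_mul, sum_add_distrib]

theorem tensorPairing_sub_smul_kronecker [DecidableEq ι] (A : ι → ι → ι → ι → ℂ) (κ : ℂ)
    (ξ η : Matrix ι ι ℂ) :
    tensorPairing (fun i j k l => A i j k l - κ * if i = l ∧ k = j then 1 else 0) ξ η
      = tensorPairing A ξ η - κ * ∑ i, ∑ j, ξ i j * η j i := by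
  simp [tensorPairing_apply, sub_mul, mul_sum, mul_assoc, ite_and]

theorem eq_zero_of_tensorPairing_posSemidef [DecidableEq ι] {A : ι → ι → ι → ι → ℂ}
    (h : ∀ ξ η : Matrix ι ι ℂ, ξ.PosSemidef → η.PosSemidef → tensorPairing A ξ η = 0) :
    A = 0 := by
  have hA : tensorPairing A = 0 :=
    LinearMap.ext_on (Matrix.span_posSemidef ι) fun ξ hξ =>
      LinearMap.ext_on (Matrix.span_posSemidef ι) fun η hη => h ξ η hξ hη
  ext i j k l
  simpa [hA] using (tensorPairing_single A i j k l).symm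

theorem add_swap_eq_zero_of_tensorPairing_self [DecidableEq ι] {A : ι → ι → ι → ι → ℂ}
    (h : ∀ ξ : Matrix ι ι ℂ, ξ.PosSemidef → tensorPairing A ξ ξ = 0) (i j k l : ι) :
    A i j k l + A k l i j = 0 := by
  suffices hsym : (fun i j k l => A i j k l + A k l i j) = 0 by
    simpa using congrFun (congrFun (congrFun (congrFun hsym i) j) k) l
  refine eq_zero_of_tensorPairing_posSemidef fun ξ η hξ hη => ?_
  have hpolar := h (ξ + η) (hξ.add hη)
  simp only [map_add, LinearMap.add_apply, h ξ hξ, h η hη] at hpolar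
  rw [tensorPairing_add, tensorPairing_swap A]
  linear_combination hpolar

theorem add_swap_of_tensorPairing_self_eq [DecidableEq ι] {A : ι → ι → ι → ι → ℂ} (κ : ℂ)
    (h : ∀ ξ : Matrix ι ι ℂ, ξ.PosSemidef → tensorPairing A ξ ξ = κ * ∑ i, ∑ j, ξ i j * ξ j i)
    (i j k l : ι) :
    A i j k l + A k l i j = 2 * κ * if i = l ∧ k = j then 1 else 0 := by
  have hzero := add_swap_eq_zero_of_tensorPairing_self
    (A := fun i j k l => A i j k l - κ * if i = l ∧ k = j then 1 else 0)
    (fun ξ hξ => by rw [tensorPairing_sub_smul_kronecker, h ξ hξ, sub_self]) i j k l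
  simp only [and_comm (a := k = j)] at hzero
  linear_combination hzero

end TensorPairing

theorem constant_tempered_RBC_polarization_general (n : ℕ) (τ κ₀ : ℝ)
    (R : Fin n → Fin n → Fin n → Fin n → ℂ)
    (T : Fin n → Fin n → Fin n → ℂ)
    (hT : ∀ i k r : Fin n, T i k r = - T k i r)
    (hconst : ∀ ξ : Matrix (Fin n) (Fin n) ℂ, ξ.PosSemidef →
      (∑ i : Fin n, ∑ j : Fin n, ∑ k : Fin n, ∑ l : Fin n,
        (R i j k l - (((1 - τ)/4 : ℝ) : ℂ)
            * ∑ r : Fin n, T i k r * (starRingEnd ℂ) (T j l r)) * ξ i j * ξ k l)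
      = (κ₀ : ℂ) * ∑ i : Fin n, ∑ j : Fin n, ξ i j * ξ j i) :
    ∀ i j k l : Fin n,
      R i j k l + R k l i j
        = 2 * (κ₀ : ℂ) * (if i = l ∧ k = j then 1 else 0)
          + (((1 - τ)/2 : ℝ) : ℂ) * ∑ r : Fin n, T i k r * (starRingEnd ℂ) (T j l r) := by
  intro i j k l
  have htorsion : ∑ r, T k i r * (starRingEnd ℂ) (T l j r)
      = ∑ r, T i k r * (starRingEnd ℂ) (T j l r) :=
    sum_congr rfl fun r _ => by rw [hT k i r, hT l j r, map_neg, neg_mul_neg]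
  have hsym := add_swap_of_tensorPairing_self_eq (κ₀ : ℂ) hconst i j k l
  rw [htorsion] at hsym
  push_cast at hsym ⊢
  linear_combination hsym

/-- Polarization identity (2.6) in the proof of Proposition 2.4: if the tempered real
bisectional curvature at parameter `τ` is pointwise constant equal to `κ₀`, then the
symmetrized curvature components are determined by `κ₀` and the torsion. -/
theorem constant_tempered_RBC_polarization (n : ℕ) (hn : 1 ≤ n) (τ κ₀ : ℝ)
    (R : Fin n → Fin n → Fin n → Fin n → ℂ)
    (T : Fin n → Fin n → Fin n → ℂ)
    (hT : ∀ i k r : Fin n, T i k r = - T k i r)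
    (hconst : ∀ ξ : Matrix (Fin n) (Fin n) ℂ, ξ.PosSemidef →
      (∑ i : Fin n, ∑ j : Fin n, ∑ k : Fin n, ∑ l : Fin n,
        (R i j k l - (((1 - τ)/4 : ℝ) : ℂ)
            * ∑ r : Fin n, T i k r * (starRingEnd ℂ) (T j l r)) * ξ i j * ξ k l)
      = (κ₀ : ℂ) * ∑ i : Fin n, ∑ j : Fin n, ξ i j * ξ j i) :
    ∀ i j k l : Fin n,
      R i j k l + R k l i j
        = 2 * (κ₀ : ℂ) * (if i = l ∧ k = j then 1 else 0)
          + (((1 - τ)/2 : ℝ) : ℂ) * ∑ r : Fin n, T i k r * (starRingEnd ℂ) (T j l r) :=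
  constant_tempered_RBC_polarization_general n τ κ₀ R T hT hconst
end

section
/- Let n ≥ 1, let τ, κ₀ be real numbers, let R be a curvature-type tensor, and let T be a torsion-type tensor that is antisymmetric in its first two arguments (T i k r = − T k i r). Suppose that for all indices i, j, k, l: R i j k l + R k l i j = 2 κ₀ · (if i = l ∧ k = j then 1 else 0) + ((1−τ)/2) · ∑_r T i k r · conj (T j l r). Then ∑_{i,k} (R i i k k − R k i i k) = κ₀ · n · (1 − n) + ((1−τ)/2) · ∑_{i,k,r} ‖T i k r‖², where the left-hand side (a priori a complex number) equals the real number on the right. -/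
/-!
Symmetrizing `R` in its two index pairs turns both traces `∑ R i ī k k̄` and `∑ R k ī i k̄`
into traces of the right-hand side of the polarized identity: the diagonal contraction
`(i,i,k,k)` sees `|T|²` and `n` copies of `κ₀`, while the cross contraction `(i,k,k,i)` sees
`-|T|²` (by antisymmetry of `T`) and `n²` copies of `κ₀`.
-/

open Finset

section

variable {ι 𝕜 : Type*} [Fintype ι] [RCLike 𝕜]

lemma two_mul_sum_sum_eq_sum_sum_add_swap (f : ι → ι → 𝕜) :
    2 * ∑ i, ∑ k, f i k = ∑ i, ∑ k, (f i k + f k i) := by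
  simp only [sum_add_distrib]
  rw [sum_comm (f := fun i k => f k i)]
  ring

variable [DecidableEq ι] (R : ι → ι → ι → ι → 𝕜) (T : ι → ι → ι → 𝕜) (κ c : 𝕜)

lemma two_mul_sum_diag_of_add_swap_eq
    (hpol : ∀ i j k l, R i j k l + R k l i j
      = 2 * κ * (if i = l ∧ k = j then 1 else 0)
        + c * ∑ r, T i k r * (starRingEnd 𝕜) (T j l r)) :
    2 * ∑ i, ∑ k, R i i k k
      = 2 * κ * Fintype.card ι + c * ((∑ i, ∑ k, ∑ r, ‖T i k r‖ ^ 2 : ℝ) : 𝕜) := by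
  have hδ (i k : ι) : (i = k ∧ k = i) ↔ i = k := and_iff_left_of_imp Eq.symm
  rw [two_mul_sum_sum_eq_sum_sum_add_swap]
  simp only [hpol, RCLike.mul_conj, hδ, mul_ite, mul_one, mul_zero, sum_add_distrib,
    sum_ite_eq, mem_univ, if_true, sum_const, card_univ, nsmul_eq_mul]
  push_cast
  simp only [mul_sum]
  ring

lemma two_mul_sum_cross_of_add_swap_eq
    (hT : ∀ i k r, T i k r = - T k i r)
    (hpol : ∀ i j k l, R i j k l + R k l i j
      = 2 * κ * (if i = l ∧ k = j then 1 else 0)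
        + c * ∑ r, T i k r * (starRingEnd 𝕜) (T j l r)) :
    2 * ∑ i, ∑ k, R k i i k
      = 2 * κ * Fintype.card ι ^ 2 - c * ((∑ i, ∑ k, ∑ r, ‖T i k r‖ ^ 2 : ℝ) : 𝕜) := by
  have hT_conj : ∀ i k r, T i k r * (starRingEnd 𝕜) (T k i r) = -(‖T i k r‖ : 𝕜) ^ 2 := by
    intro i k r
    rw [hT k i r, map_neg, mul_neg, RCLike.mul_conj]
  rw [sum_comm, two_mul_sum_sum_eq_sum_sum_add_swap]
  simp only [hpol, hT_conj, and_self, if_true, mul_one, sum_neg_distrib,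
    mul_neg, sum_add_distrib, sum_const, card_univ, nsmul_eq_mul]
  push_cast
  simp only [mul_sum]
  ring

end

theorem constant_tempered_RBC_divergence_identity_general (n : ℕ) (τ κ₀ : ℝ)
    (R : Fin n → Fin n → Fin n → Fin n → ℂ)
    (T : Fin n → Fin n → Fin n → ℂ)
    (hT : ∀ i k r : Fin n, T i k r = - T k i r)
    (hpol : ∀ i j k l : Fin n,
      R i j k l + R k l i j
        = 2 * (κ₀ : ℂ) * (if i = l ∧ k = j then 1 else 0)
          + (((1 - τ)/2 : ℝ) : ℂ) * ∑ r : Fin n, T i k r * (starRingEnd ℂ) (T j l r)) :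
    (∑ i : Fin n, ∑ k : Fin n, (R i i k k - R k i i k))
      = ((κ₀ * (n : ℝ) * (1 - (n : ℝ))
          + ((1 - τ)/2) * ∑ i : Fin n, ∑ k : Fin n, ∑ r : Fin n, ‖T i k r‖^2 : ℝ) : ℂ) := by
  have hdiag := two_mul_sum_diag_of_add_swap_eq R T _ _ hpol
  have hcross := two_mul_sum_cross_of_add_swap_eq R T _ _ hT hpol
  rw [Fintype.card_fin] at hdiag hcross
  simp only [sum_sub_distrib]
  push_cast at hdiag hcross ⊢
  linear_combination (hdiag - hcross) / 2

/-- Pointwise algebraic identity at the heart of Proposition 2.4: the divergence of the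
torsion `(1,0)`-form in terms of the constant `κ₀` and the torsion norm. -/
theorem constant_tempered_RBC_divergence_identity (n : ℕ) (hn : 1 ≤ n) (τ κ₀ : ℝ)
    (R : Fin n → Fin n → Fin n → Fin n → ℂ)
    (T : Fin n → Fin n → Fin n → ℂ)
    (hT : ∀ i k r : Fin n, T i k r = - T k i r)
    (hpol : ∀ i j k l : Fin n,
      R i j k l + R k l i j
        = 2 * (κ₀ : ℂ) * (if i = l ∧ k = j then 1 else 0)
          + (((1 - τ)/2 : ℝ) : ℂ) * ∑ r : Fin n, T i k r * (starRingEnd ℂ) (T j l r)) :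
    (∑ i : Fin n, ∑ k : Fin n, (R i i k k - R k i i k))
      = ((κ₀ * (n : ℝ) * (1 - (n : ℝ))
          + ((1 - τ)/2) * ∑ i : Fin n, ∑ k : Fin n, ∑ r : Fin n, ‖T i k r‖^2 : ℝ) : ℂ) :=
  constant_tempered_RBC_divergence_identity_general n τ κ₀ R T hT hpol
end

section
/- Let n ≥ 1, let t be a real number with t ≠ 0 and t ≠ 1/2, let τ be a real number with τ ≠ 0, let cR be a curvature-type tensor, and let cT be a torsion-type tensor that is antisymmetric in its first two arguments (cT i k r = − cT k i r). Define tR i j k l := t · cR i j k l + ((1−t)/2) · (cR k j i l + cR i l k j) + ((1−t)/2)² · (∑_r cT i k r · conj (cT j l r) − ∑_r cT i r l · conj (cT j r k)) and tT i j k := t · cT i j k. For a curvature-type tensor S define the four Ricci traces Ric¹ S k l := ∑_i S k l i i, Ric² S k l := ∑_i S i i k l, Ric³ S k l := ∑_i S k i i l, Ric⁴ S k l := ∑_i S i l k i. Then for all indices k, l: Ric² cR k l + ((1 − 1/τ)/4) · ∑_{p,q} cT p q l · conj (cT p q k) = ((t²+2t−1)/(2t(2t−1))) · Ric² tR k l +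 ((t−1)²/(2t(2t−1))) · Ric¹ tR k l + ((t−1)/(2(2t−1))) · (Ric³ tR k l + Ric⁴ tR k l) + ((t−1)²(t²−4t+1)/(8t³(2t−1))) · ∑_{i,r} tT i k r · conj (tT i l r) + ((t−1)³/(8t²(2t−1))) · (∑_{i,r} tT k r l · conj (tT i r i) + ∑_{i,r} tT i r i · conj (tT l r k)) + (((t−1)²(t²+2t−1))/(8t³(2t−1)) + (1 − 1/τ)/(4t²)) · ∑_{i,r} tT i r l · conj (tT i r k). -/
/-!
Each Ricci trace of the Gauduchon curvature is `t` times the same trace of the Chern curvature,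
plus `(1 - t)/2` times two of the other traces, plus `((1 - t)/2)²` times quadratic torsion
terms, which the antisymmetry of `ᶜT` brings into a common form; `ᵗT = t ᶜT` rescales them by
`t²`. Inverting this linear system, possible when `t ≠ 0` and `2t ≠ 1`, recovers `ᶜRic⁽²⁾`.
-/

open Finset ComplexConjugate

variable {ι : Type*} [Fintype ι]

/-- `ᵗR_{i j̄ k l̄}` of `ᵗ∇ = t ᶜ∇ + (1 - t) ˡ∇`, from the Chern curvature `R` and torsion `T`. -/
noncomputable def gauduchonCurvature (t : ℝ) (R : ι → ι → ι → ι → ℂ) (T : ι → ι → ι → ℂ) :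
    ι → ι → ι → ι → ℂ :=
  fun i j k l => (t : ℂ) * R i j k l
    + (((1 - t)/2 : ℝ) : ℂ) * (R k j i l + R i l k j)
    + ((((1 - t)/2)^2 : ℝ) : ℂ)
        * ((∑ r, T i k r * conj (T j l r)) - ∑ r, T i r l * conj (T j r k))

def ricci₁ (S : ι → ι → ι → ι → ℂ) (k l : ι) : ℂ := ∑ i, S k l i i

def ricci₂ (S : ι → ι → ι → ι → ℂ) (k l : ι) : ℂ := ∑ i, S i i k l

def ricci₃ (S : ι → ι → ι → ι → ℂ) (k l : ι) : ℂ := ∑ i, S k i i l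

def ricci₄ (S : ι → ι → ι → ι → ℂ) (k l : ι) : ℂ := ∑ i, S i l k i

section GauduchonRicci

variable (t : ℝ) (R : ι → ι → ι → ι → ℂ) (T : ι → ι → ι → ℂ) (k l : ι)

theorem ricci₁_gauduchonCurvature :
    ricci₁ (gauduchonCurvature t R T) k l
      = t * ricci₁ R k l + (((1 - t)/2 : ℝ) : ℂ) * (ricci₃ R k l + ricci₄ R k l) := by
  simp only [ricci₁, ricci₃, ricci₄, gauduchonCurvature, sum_add_distrib, sum_sub_distrib,
    ← mul_sum]
  rw [sum_comm (f := fun i r => T k r i * conj (T l r i)), sub_self, mul_zero, add_zero,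
    add_comm (∑ i, R i l k i)]

theorem ricci₂_gauduchonCurvature :
    ricci₂ (gauduchonCurvature t R T) k l
      = t * ricci₂ R k l + (((1 - t)/2 : ℝ) : ℂ) * (ricci₃ R k l + ricci₄ R k l)
        + ((((1 - t)/2)^2 : ℝ) : ℂ) * ((∑ i, ∑ r, T i k r * conj (T i l r))
          - ∑ i, ∑ r, T i r l * conj (T i r k)) := by
  simp only [ricci₂, ricci₃, ricci₄, gauduchonCurvature, sum_add_distrib, sum_sub_distrib,
    ← mul_sum]

variable {T} (hT : ∀ i k r, T i k r = -T k i r)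
include hT

theorem ricci₃_gauduchonCurvature :
    ricci₃ (gauduchonCurvature t R T) k l
      = t * ricci₃ R k l + (((1 - t)/2 : ℝ) : ℂ) * (ricci₂ R k l + ricci₁ R k l)
        - ((((1 - t)/2)^2 : ℝ) : ℂ) * ((∑ i, ∑ r, T i k r * conj (T i l r))
          + ∑ i, ∑ r, T k r l * conj (T i r i)) := by
  have hswap : ∑ i, ∑ r, T k i r * conj (T i l r) = -∑ i, ∑ r, T i k r * conj (T i l r) := by
    simp only [hT k, neg_mul, sum_neg_distrib]
  simp only [ricci₁, ricci₂, ricci₃, gauduchonCurvature, sum_add_distrib,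
    sum_sub_distrib, ← mul_sum, hswap]
  ring

theorem ricci₄_gauduchonCurvature :
    ricci₄ (gauduchonCurvature t R T) k l
      = t * ricci₄ R k l + (((1 - t)/2 : ℝ) : ℂ) * (ricci₁ R k l + ricci₂ R k l)
        - ((((1 - t)/2)^2 : ℝ) : ℂ) * ((∑ i, ∑ r, T i k r * conj (T i l r))
          + ∑ i, ∑ r, T i r i * conj (T l r k)) := by
  have hswap : ∑ i, ∑ r, T i k r * conj (T l i r) = -∑ i, ∑ r, T i k r * conj (T i l r) := by
    simp only [hT l, map_neg, mul_neg, sum_neg_distrib]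
  simp only [ricci₁, ricci₂, ricci₄, gauduchonCurvature, sum_add_distrib,
    sum_sub_distrib, ← mul_sum, hswap]
  ring

end GauduchonRicci

theorem sum_sum_ofReal_mul_mul_conj {κ : Type*} [Fintype κ] (t : ℝ) (f g : ι → κ → ℂ) :
    ∑ i, ∑ r, t * f i r * conj (t * g i r) = (t : ℂ)^2 * ∑ i, ∑ r, f i r * conj (g i r) := by
  simp only [map_mul, Complex.conj_ofReal, mul_sum]
  exact sum_congr rfl fun _ _ => sum_congr rfl fun _ _ => by ring

theorem tempered_ricci_from_gauduchon_general (n : ℕ) (t : ℝ)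
    (ht0 : t ≠ 0) (ht2 : t ≠ 1/2) (τ : ℝ)
    (cR : Fin n → Fin n → Fin n → Fin n → ℂ)
    (cT : Fin n → Fin n → Fin n → ℂ)
    (hcT : ∀ i k r : Fin n, cT i k r = - cT k i r)
    (tR : Fin n → Fin n → Fin n → Fin n → ℂ)
    (tT : Fin n → Fin n → Fin n → ℂ)
    (htR : ∀ i j k l : Fin n,
      tR i j k l = (t : ℂ) * cR i j k l
        + (((1 - t)/2 : ℝ) : ℂ) * (cR k j i l + cR i l k j)
        + ((((1 - t)/2)^2 : ℝ) : ℂ)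
            * ((∑ r : Fin n, cT i k r * (starRingEnd ℂ) (cT j l r))
              - (∑ r : Fin n, cT i r l * (starRingEnd ℂ) (cT j r k))))
    (htT : ∀ i j k : Fin n, tT i j k = (t : ℂ) * cT i j k)
    (Ric₁ Ric₂ Ric₃ Ric₄ : (Fin n → Fin n → Fin n → Fin n → ℂ) → Fin n → Fin n → ℂ)
    (hRic₁ : ∀ S k l, Ric₁ S k l = ∑ i : Fin n, S k l i i)
    (hRic₂ : ∀ S k l, Ric₂ S k l = ∑ i : Fin n, S i i k l)
    (hRic₃ : ∀ S k l, Ric₃ S k l = ∑ i : Fin n, S k i i l)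
    (hRic₄ : ∀ S k l, Ric₄ S k l = ∑ i : Fin n, S i l k i) :
    ∀ k l : Fin n,
      Ric₂ cR k l + (((1 - 1/τ)/4 : ℝ) : ℂ)
          * ∑ p : Fin n, ∑ q : Fin n, cT p q l * (starRingEnd ℂ) (cT p q k)
        = (((t^2 + 2*t - 1)/(2*t*(2*t - 1)) : ℝ) : ℂ) * Ric₂ tR k l
          + (((t - 1)^2/(2*t*(2*t - 1)) : ℝ) : ℂ) * Ric₁ tR k l
          + (((t - 1)/(2*(2*t - 1)) : ℝ) : ℂ) * (Ric₃ tR k l + Ric₄ tR k l)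
          + (((t - 1)^2*(t^2 - 4*t + 1)/(8*t^3*(2*t - 1)) : ℝ) : ℂ)
              * ∑ i : Fin n, ∑ r : Fin n, tT i k r * (starRingEnd ℂ) (tT i l r)
          + (((t - 1)^3/(8*t^2*(2*t - 1)) : ℝ) : ℂ)
              * ((∑ i : Fin n, ∑ r : Fin n, tT k r l * (starRingEnd ℂ) (tT i r i))
                + (∑ i : Fin n, ∑ r : Fin n, tT i r i * (starRingEnd ℂ) (tT l r k)))
          + ((((t - 1)^2*(t^2 + 2*t - 1))/(8*t^3*(2*t - 1)) + (1 - 1/τ)/(4*t^2) : ℝ) : ℂ)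
              * ∑ i : Fin n, ∑ r : Fin n, tT i r l * (starRingEnd ℂ) (tT i r k) := by
  obtain rfl : tR = gauduchonCurvature t cR cT := by ext i j k l; exact htR i j k l
  obtain rfl : Ric₁ = ricci₁ := by ext S k l; exact hRic₁ S k l
  obtain rfl : Ric₂ = ricci₂ := by ext S k l; exact hRic₂ S k l
  obtain rfl : Ric₃ = ricci₃ := by ext S k l; exact hRic₃ S k l
  obtain rfl : Ric₄ = ricci₄ := by ext S k l; exact hRic₄ S k l
  intro k l
  rw [ricci₁_gauduchonCurvature, ricci₂_gauduchonCurvature, ricci₃_gauduchonCurvature (hT := hcT),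
    ricci₄_gauduchonCurvature (hT := hcT)]
  simp only [htT, sum_sum_ofReal_mul_mul_conj]
  have ht0' : (t : ℂ) ≠ 0 := by exact_mod_cast ht0
  have ht2' : (2 * t - 1 : ℂ) ≠ 0 := by
    rw [sub_ne_zero]; exact_mod_cast fun h => ht2 (by linarith)
  push_cast
  -- `field_simp` clears the denominator `2t - 1` reliably only as an atom.
  set u := 2 * (t : ℂ) - 1 with hu
  field_simp
  rw [hu]
  ring

/-- First identity of Proposition 5.3: the tempered Ricci curvature `ᶜRic^τ` of the Chern
connection expressed through the Ricci traces and torsion of the Gauduchon connection. -/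
theorem tempered_ricci_from_gauduchon (n : ℕ) (hn : 1 ≤ n) (t : ℝ)
    (ht0 : t ≠ 0) (ht2 : t ≠ 1/2) (τ : ℝ) (hτ : τ ≠ 0)
    (cR : Fin n → Fin n → Fin n → Fin n → ℂ)
    (cT : Fin n → Fin n → Fin n → ℂ)
    (hcT : ∀ i k r : Fin n, cT i k r = - cT k i r)
    (tR : Fin n → Fin n → Fin n → Fin n → ℂ)
    (tT : Fin n → Fin n → Fin n → ℂ)
    (htR : ∀ i j k l : Fin n,
      tR i j k l = (t : ℂ) * cR i j k l
        + (((1 - t)/2 : ℝ) : ℂ) * (cR k j i l + cR i l k j)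
        + ((((1 - t)/2)^2 : ℝ) : ℂ)
            * ((∑ r : Fin n, cT i k r * (starRingEnd ℂ) (cT j l r))
              - (∑ r : Fin n, cT i r l * (starRingEnd ℂ) (cT j r k))))
    (htT : ∀ i j k : Fin n, tT i j k = (t : ℂ) * cT i j k)
    (Ric₁ Ric₂ Ric₃ Ric₄ : (Fin n → Fin n → Fin n → Fin n → ℂ) → Fin n → Fin n → ℂ)
    (hRic₁ : ∀ S k l, Ric₁ S k l = ∑ i : Fin n, S k l i i)
    (hRic₂ : ∀ S k l, Ric₂ S k l = ∑ i : Fin n, S i i k l)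
    (hRic₃ : ∀ S k l, Ric₃ S k l = ∑ i : Fin n, S k i i l)
    (hRic₄ : ∀ S k l, Ric₄ S k l = ∑ i : Fin n, S i l k i) :
    ∀ k l : Fin n,
      Ric₂ cR k l + (((1 - 1/τ)/4 : ℝ) : ℂ)
          * ∑ p : Fin n, ∑ q : Fin n, cT p q l * (starRingEnd ℂ) (cT p q k)
        = (((t^2 + 2*t - 1)/(2*t*(2*t - 1)) : ℝ) : ℂ) * Ric₂ tR k l
          + (((t - 1)^2/(2*t*(2*t - 1)) : ℝ) : ℂ) * Ric₁ tR k l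
          + (((t - 1)/(2*(2*t - 1)) : ℝ) : ℂ) * (Ric₃ tR k l + Ric₄ tR k l)
          + (((t - 1)^2*(t^2 - 4*t + 1)/(8*t^3*(2*t - 1)) : ℝ) : ℂ)
              * ∑ i : Fin n, ∑ r : Fin n, tT i k r * (starRingEnd ℂ) (tT i l r)
          + (((t - 1)^3/(8*t^2*(2*t - 1)) : ℝ) : ℂ)
              * ((∑ i : Fin n, ∑ r : Fin n, tT k r l * (starRingEnd ℂ) (tT i r i))
                + (∑ i : Fin n, ∑ r : Fin n, tT i r i * (starRingEnd ℂ) (tT l r k)))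
          + ((((t - 1)^2*(t^2 + 2*t - 1))/(8*t^3*(2*t - 1)) + (1 - 1/τ)/(4*t^2) : ℝ) : ℂ)
              * ∑ i : Fin n, ∑ r : Fin n, tT i r l * (starRingEnd ℂ) (tT i r k) :=
  tempered_ricci_from_gauduchon_general n t ht0 ht2 τ cR cT hcT tR tT htR htT Ric₁ Ric₂ Ric₃ Ric₄
    hRic₁ hRic₂ hRic₃ hRic₄
end

section
/- Let n ≥ 1, m ≥ 1 be natural numbers, let H : Matrix (Fin n) (Fin n) ℂ be Hermitian, let F : Matrix (Fin n) (Fin m) ℂ, and let C₁, C₂ be real numbers with C₂ ≥ 0. If the matrix H + C₁ • (1 : Matrix (Fin n) (Fin n) ℂ) − C₂ • (F * Fᴴ) is positive semidefinite, then (Matrix.trace (Fᴴ * H * F)).re ≥ − C₁ · e + (C₂ / n) · e², where e := ∑_{p,α} ‖F p α‖². -/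
open scoped ComplexOrder
open Matrix

/-!
With `A = F Fᴴ`, cyclicity of the trace gives `tr (Fᴴ X F) = tr (X A)`, so pairing the positive
semidefinite matrix `H + C₁ - C₂ A` with `A` yields `tr (Fᴴ H F) ≥ C₂ tr (A²) - C₁ tr A`.
Here `tr A = e`, and `tr (A²) = ∑ |A i j|² ≥ ∑ (A i i)² ≥ (tr A)² / n` by Cauchy–Schwarz on the
diagonal of `A`.
-/

namespace Matrix

variable {𝕜 : Type*} [RCLike 𝕜] {m n : Type*} [Fintype m] [Fintype n]

theorem re_trace_mul_conjTranspose_self (F : Matrix n m 𝕜) :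
    RCLike.re (F * Fᴴ).trace = ∑ i, ∑ j, ‖F i j‖ ^ 2 := by
  simp only [trace, diag_apply, mul_apply, conjTranspose_apply, RCLike.star_def,
    RCLike.mul_conj, map_sum]
  norm_cast

theorem IsHermitian.re_trace_sq_div_card_le {A : Matrix n n 𝕜} (hA : A.IsHermitian) :
    RCLike.re A.trace ^ 2 / Fintype.card n ≤ RCLike.re (A * A).trace := by
  have hsum : RCLike.re (A * A).trace = ∑ i, ∑ j, ‖A i j‖ ^ 2 := by
    rw [← re_trace_mul_conjTranspose_self, hA.eq]
  have hdiag : ∑ i, RCLike.re (A i i) ^ 2 ≤ RCLike.re (A * A).trace := by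
    rw [hsum]
    gcongr with i
    calc RCLike.re (A i i) ^ 2 ≤ ‖A i i‖ ^ 2 := by
          rw [← sq_abs]; gcongr; exact RCLike.abs_re_le_norm _
      _ ≤ ∑ j, ‖A i j‖ ^ 2 :=
        Finset.single_le_sum (f := fun j ↦ ‖A i j‖ ^ 2) (fun j _ ↦ by positivity)
          (Finset.mem_univ i)
  refine div_le_of_le_mul₀ (Nat.cast_nonneg _) (hsum ▸ by positivity) ?_
  calc RCLike.re A.trace ^ 2 = (∑ i, RCLike.re (A i i)) ^ 2 := by simp [trace]
    _ ≤ Fintype.card n * ∑ i, RCLike.re (A i i) ^ 2 := sq_sum_le_card_mul_sum_sq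
    _ ≤ _ := by rw [mul_comm]; gcongr

theorem re_trace_conjTranspose_mul_mul_ge_of_posSemidef [DecidableEq n]
    {H : Matrix n n 𝕜} {F : Matrix n m 𝕜} {C₁ C₂ : ℝ}
    (hpsd : (H + C₁ • (1 : Matrix n n 𝕜) - C₂ • (F * Fᴴ)).PosSemidef) :
    C₂ * RCLike.re (F * Fᴴ * (F * Fᴴ)).trace - C₁ * RCLike.re (F * Fᴴ).trace ≤
      RCLike.re (Fᴴ * H * F).trace := by
  have hnonneg := RCLike.nonneg_iff.mp (hpsd.conjTranspose_mul_mul_same F).trace_nonneg |>.1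
  have hcycle : ∀ X : Matrix n n 𝕜, (Fᴴ * X * F).trace = (X * (F * Fᴴ)).trace := fun X ↦ by
    rw [trace_mul_cycle, trace_mul_comm]
  rw [hcycle] at hnonneg ⊢
  simp only [Matrix.sub_mul, Matrix.add_mul, Matrix.smul_mul, Matrix.one_mul, trace_sub,
    trace_add, trace_smul, map_sub, map_add, RCLike.smul_re] at hnonneg
  linarith

end Matrix

theorem source_curvature_estimate_general (n m : ℕ)
    (H : Matrix (Fin n) (Fin n) ℂ)
    (F : Matrix (Fin n) (Fin m) ℂ) (C₁ C₂ : ℝ) (hC₂ : 0 ≤ C₂)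
    (hpsd : (H + C₁ • (1 : Matrix (Fin n) (Fin n) ℂ) - C₂ • (F * Fᴴ)).PosSemidef) :
    (Matrix.trace (Fᴴ * H * F)).re
      ≥ - C₁ * (∑ p : Fin n, ∑ α : Fin m, ‖F p α‖^2)
        + (C₂ / n) * (∑ p : Fin n, ∑ α : Fin m, ‖F p α‖^2)^2 := by
  have hA := (isHermitian_mul_conjTranspose_self F).re_trace_sq_div_card_le
  have hbound := re_trace_conjTranspose_mul_mul_ge_of_posSemidef hpsd
  simp only [re_trace_mul_conjTranspose_self, Fintype.card_fin, RCLike.re_to_complex] at hA hbound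
  rw [ge_iff_le, div_mul_eq_mul_div, mul_div_assoc]
  linarith [mul_le_mul_of_nonneg_left hA hC₂]

/-- Source-curvature estimate in the proof of Theorem 1.2: if
`H + C₁ • 1 − C₂ • (F * Fᴴ)` is positive semidefinite, then the Ricci term
`trace (Fᴴ * H * F)` is bounded below by `−C₁ e + (C₂/n) e²`, where `e` is the squared
Frobenius norm of `F` (the energy density). -/
theorem source_curvature_estimate (n m : ℕ) (hn : 1 ≤ n) (hm : 1 ≤ m)
    (H : Matrix (Fin n) (Fin n) ℂ) (hH : H.IsHermitian)
    (F : Matrix (Fin n) (Fin m) ℂ) (C₁ C₂ : ℝ) (hC₂ : 0 ≤ C₂)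
    (hpsd : (H + C₁ • (1 : Matrix (Fin n) (Fin n) ℂ) - C₂ • (F * Fᴴ)).PosSemidef) :
    (Matrix.trace (Fᴴ * H * F)).re
      ≥ - C₁ * (∑ p : Fin n, ∑ α : Fin m, ‖F p α‖^2)
        + (C₂ / n) * (∑ p : Fin n, ∑ α : Fin m, ‖F p α‖^2)^2 :=
  source_curvature_estimate_general n m H F C₁ C₂ hC₂ hpsd
end

section
/- Let n ≥ 1, let A : Fin n → Fin n → Fin n → ℂ, let ε > 0 be real, and let ξ : Matrix (Fin n) (Fin n) ℂ be a nonzero Hermitian positive semidefinite matrix. Define the curvature-type tensor R i j k l := (1/2) · ∑_p A i k p · conj (A j l p) − ε · (if k = j then 1 else 0) · (if i = l then 1 else 0) and the torsion-type tensor T i j p := 2 · A i j p. Then Re (∑_{i,j,k,l} (R i j k l − (1/4) · ∑_p T i k p · conj (T j l p)) · ξ i j · ξ k l) < 0. -/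
/-!
Since `T = 2A`, the torsion correction `¼ T T̄` is `A Ā`, so the tempered form equals
`-½ ∑ₚ ⟨Aₚ, (ξ ⊗ ξ) Aₚ⟩ - ε tr(ξ²)`. The first term is a Hermitian form of the Kronecker square
`ξ ⊗ ξ`, which is positive semidefinite, and `tr(ξ²) = ‖ξ‖²_F > 0` because `ξ` is Hermitian and
nonzero.
-/

open scoped ComplexOrder Kronecker

namespace Matrix

variable {ι : Type*} [Fintype ι]

theorem PosSemidef.sum_mul_conj_mul_mul_nonneg {ξ : Matrix ι ι ℂ} (hξ : ξ.PosSemidef)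
    (M : Matrix ι ι ℂ) :
    0 ≤ ∑ i, ∑ j, ∑ k, ∑ l, M i k * starRingEnd ℂ (M j l) * ξ i j * ξ k l := by
  have h := (hξ.kronecker hξ).dotProduct_mulVec_nonneg (fun x => starRingEnd ℂ (M x.1 x.2))
  convert h using 1
  simp only [dotProduct, mulVec, Fintype.sum_prod_type, kroneckerMap_apply, Pi.star_apply,
    Complex.star_def, Complex.conj_conj, Finset.mul_sum]
  refine Finset.sum_congr rfl fun i _ => ?_
  rw [Finset.sum_comm]
  exact Finset.sum_congr rfl fun k _ => Finset.sum_congr rfl fun j _ =>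
    Finset.sum_congr rfl fun l _ => by ring

theorem IsHermitian.sum_mul_apply_pos {ξ : Matrix ι ι ℂ} (hξ : ξ.IsHermitian) (hξ0 : ξ ≠ 0) :
    0 < ∑ i, ∑ j, ξ i j * ξ j i := by
  have htr : (ξ * ξ).trace = ∑ i, ∑ j, ξ i j * ξ j i := by simp [trace, mul_apply]
  rw [← htr]
  nth_rewrite 1 [← hξ.eq]
  exact (posSemidef_conjTranspose_mul_self ξ).trace_nonneg.lt_of_ne'
    (trace_conjTranspose_mul_self_eq_zero_iff.not.mpr hξ0)

end Matrix

theorem sum_curvature_sub_torsion_eq {ι : Type*} [Fintype ι] [DecidableEq ι]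
    (A : ι → ι → ι → ℂ) (ε : ℝ) (ξ : Matrix ι ι ℂ)
    (R : ι → ι → ι → ι → ℂ) (T : ι → ι → ι → ℂ)
    (hR : ∀ i j k l, R i j k l = (1/2 : ℂ) * ∑ p, A i k p * starRingEnd ℂ (A j l p)
        - (ε : ℂ) * (if k = j then 1 else 0) * (if i = l then 1 else 0))
    (hT : ∀ i j p, T i j p = 2 * A i j p) :
    ∑ i, ∑ j, ∑ k, ∑ l,
        (R i j k l - (1/4 : ℂ) * ∑ p, T i k p * starRingEnd ℂ (T j l p)) * ξ i j * ξ k l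
      = -(1/2 : ℂ) * ∑ p, ∑ i, ∑ j, ∑ k, ∑ l,
          A i k p * starRingEnd ℂ (A j l p) * ξ i j * ξ k l
        - ε * ∑ i, ∑ j, ξ i j * ξ j i := by
  have hsummand : ∀ i j k l,
      (R i j k l - (1/4 : ℂ) * ∑ p, T i k p * starRingEnd ℂ (T j l p)) * ξ i j * ξ k l
        = -(1/2 : ℂ) * ∑ p, A i k p * starRingEnd ℂ (A j l p) * ξ i j * ξ k l
          - ε * (if k = j then (if i = l then ξ i j * ξ k l else 0) else 0) := by
    intro i j k l
    have hT4 : ∑ p, T i k p * starRingEnd ℂ (T j l p)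
        = 4 * ∑ p, A i k p * starRingEnd ℂ (A j l p) := by
      simp only [hT, map_mul, map_ofNat, Finset.mul_sum]
      exact Finset.sum_congr rfl fun p _ => by ring
    rw [hR, hT4, ← Finset.sum_mul, ← Finset.sum_mul]
    split_ifs <;> ring
  simp only [hsummand, Finset.sum_sub_distrib, ← Finset.mul_sum]
  refine congrArg₂ (· - ·) (congrArg _ ?_) (congrArg _ ?_)
  · iterate 3 ((conv_rhs => rw [Finset.sum_comm]); refine Finset.sum_congr rfl fun _ _ => ?_)
    conv_rhs => rw [Finset.sum_comm]
  · simp only [Finset.sum_ite_irrel, Finset.sum_const_zero, Finset.sum_ite_eq, Finset.sum_ite_eq',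
      Finset.mem_univ, if_true]

/-- `R` and `T` are the Chern curvature and torsion at the origin of the metric
`g_{kl̄} = δ_k^l + A_{ik}^l z^i + conj(A_{ik}^l z^i) + ½ A_{ik}^p conj(A_{jl}^p) z^i z̄^j + ε z^l z̄^k`
of Example 2.2; the sum is its tempered real bisectional curvature `RBC⁰` evaluated at `ξ`. -/
theorem example_tempered_RBC_neg_general (n : ℕ)
    (A : Fin n → Fin n → Fin n → ℂ) (ε : ℝ) (hε : 0 < ε)
    (ξ : Matrix (Fin n) (Fin n) ℂ) (hξ0 : ξ ≠ 0) (hξ : ξ.PosSemidef)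
    (R : Fin n → Fin n → Fin n → Fin n → ℂ)
    (T : Fin n → Fin n → Fin n → ℂ)
    (hR : ∀ i j k l : Fin n,
      R i j k l = (1/2 : ℂ) * ∑ p : Fin n, A i k p * (starRingEnd ℂ) (A j l p)
        - (ε : ℂ) * (if k = j then 1 else 0) * (if i = l then 1 else 0))
    (hT : ∀ i j p : Fin n, T i j p = 2 * A i j p) :
    (∑ i : Fin n, ∑ j : Fin n, ∑ k : Fin n, ∑ l : Fin n,
      (R i j k l - (1/4 : ℂ) * ∑ p : Fin n, T i k p * (starRingEnd ℂ) (T j l p))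
        * ξ i j * ξ k l).re < 0 := by
  rw [sum_curvature_sub_torsion_eq A ε ξ R T hR hT]
  set S := ∑ p, ∑ i, ∑ j, ∑ k, ∑ l, A i k p * starRingEnd ℂ (A j l p) * ξ i j * ξ k l
  have hS : 0 ≤ S := Finset.sum_nonneg fun p _ => hξ.sum_mul_conj_mul_mul_nonneg fun i k => A i k p
  have hδ : 0 < ∑ i, ∑ j, ξ i j * ξ j i := hξ.isHermitian.sum_mul_apply_pos hξ0
  have hεδ : 0 < (ε : ℂ) * ∑ i, ∑ j, ξ i j * ξ j i := mul_pos (Complex.zero_lt_real.mpr hε) hδ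
  have hSneg : -(1/2 : ℂ) * S ≤ 0 := by
    rw [neg_mul]
    exact neg_nonpos.mpr (mul_nonneg one_half_pos.le hS)
  exact (Complex.lt_def.mp (sub_neg.mpr (hSneg.trans_lt hεδ))).1

/-- Example 2.2: the metric `g_{kl̄} = δ_k^l + A_{ik}^l z^i + conj(A_{ik}^l z^i)
+ (1/2) A_{ik}^p conj(A_{jl}^p) z^i z̄^j + ε z^l z̄^k` has strictly negative tempered real
bisectional curvature `RBC⁰` at the origin. -/
theorem example_tempered_RBC_neg (n : ℕ) (hn : 1 ≤ n)
    (A : Fin n → Fin n → Fin n → ℂ) (ε : ℝ) (hε : 0 < ε)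
    (ξ : Matrix (Fin n) (Fin n) ℂ) (hξ0 : ξ ≠ 0) (hξ : ξ.PosSemidef)
    (R : Fin n → Fin n → Fin n → Fin n → ℂ)
    (T : Fin n → Fin n → Fin n → ℂ)
    (hR : ∀ i j k l : Fin n,
      R i j k l = (1/2 : ℂ) * ∑ p : Fin n, A i k p * (starRingEnd ℂ) (A j l p)
        - (ε : ℂ) * (if k = j then 1 else 0) * (if i = l then 1 else 0))
    (hT : ∀ i j p : Fin n, T i j p = 2 * A i j p) :
    (∑ i : Fin n, ∑ j : Fin n, ∑ k : Fin n, ∑ l : Fin n,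
      (R i j k l - (1/4 : ℂ) * ∑ p : Fin n, T i k p * (starRingEnd ℂ) (T j l p))
        * ξ i j * ξ k l).re < 0 :=
  example_tempered_RBC_neg_general n A ε hε ξ hξ0 hξ R T hR hT
end

section
/- Let n ≥ 1, let A : Fin n → Fin n → Fin n → ℂ with A ≠ 0, and let ε be a real number with 0 < ε < (∑_{i,k,p} ‖A i k p‖²) / (2n). Define the curvature-type tensor R i j k l := (1/2) · ∑_p A i k p · conj (A j l p) − ε · (if k = j then 1 else 0) · (if i = l then 1 else 0). Then, taking ξ to be the identity matrix, Re (∑_{i,j,k,l} R i j k l · ξ i j · ξ k l) > 0; in particular, there exists a nonzero Hermitian positive semidefinite matrix ξ for which the real bisectional curvature form ∑ R i j k l · ξ i j · ξ k l has strictly positive real part, so R does not have nonpositive real bisectional curvature. -/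
open scoped ComplexOrder

/-!
On the identity matrix the bisectional form collapses to the double trace `∑ᵢ ∑ₖ R i i k k`.
The quadratic part of `R` contributes `½ ∑ |A i k p|²` there, the tempering term only `ε n`,
so the form equals `|A|²/2 - ε n`, which is positive exactly when `ε < |A|²/(2n)`.
-/

section

variable {ι : Type*} [Fintype ι]

def bisectionalForm (R : ι → ι → ι → ι → ℂ) (ξ : Matrix ι ι ℂ) : ℂ :=
  ∑ i, ∑ j, ∑ k, ∑ l, R i j k l * ξ i j * ξ k l

theorem bisectionalForm_one [DecidableEq ι] (R : ι → ι → ι → ι → ℂ) :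
    bisectionalForm R 1 = ∑ i, ∑ k, R i i k k := by
  simp [bisectionalForm, Matrix.one_apply]

variable [DecidableEq ι]

/-- The Chern curvature at the origin of the metric of Example 2.2. -/
noncomputable def exampleCurvature (A : ι → ι → ι → ℂ) (ε : ℝ) (i j k l : ι) : ℂ :=
  (1/2 : ℂ) * ∑ p, A i k p * (starRingEnd ℂ) (A j l p)
    - (ε : ℂ) * (if k = j then 1 else 0) * (if i = l then 1 else 0)

theorem sum_exampleCurvature_diag (A : ι → ι → ι → ℂ) (ε : ℝ) :
    ∑ i, ∑ k, exampleCurvature A ε i i k k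
      = (((∑ i, ∑ k, ∑ p, ‖A i k p‖ ^ 2) / 2 - ε * Fintype.card ι : ℝ) : ℂ) := by
  have hnorm : ∀ z : ℂ, z * (starRingEnd ℂ) z = ((‖z‖ ^ 2 : ℝ) : ℂ) := fun z => by
    rw [Complex.mul_conj, Complex.normSq_eq_norm_sq]
  simp only [exampleCurvature, hnorm, Finset.sum_sub_distrib, ← Finset.mul_sum]
  push_cast
  simp only [one_div, mul_ite, mul_one, mul_zero, Finset.sum_ite_eq, Finset.mem_univ, ↓reduceIte,
    Finset.sum_const, Finset.card_univ, nsmul_eq_mul]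
  ring

theorem bisectionalForm_exampleCurvature_one (A : ι → ι → ι → ℂ) (ε : ℝ) :
    (bisectionalForm (exampleCurvature A ε) 1).re
      = (∑ i, ∑ k, ∑ p, ‖A i k p‖ ^ 2) / 2 - ε * Fintype.card ι := by
  rw [bisectionalForm_one, sum_exampleCurvature_diag, Complex.ofReal_re]

end

theorem example_RBC_not_nonpositive_general (n : ℕ) (hn : 1 ≤ n)
    (A : Fin n → Fin n → Fin n → ℂ) (ε : ℝ)
    (hε' : ε < (∑ i : Fin n, ∑ k : Fin n, ∑ p : Fin n, ‖A i k p‖^2) / (2 * n))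
    (R : Fin n → Fin n → Fin n → Fin n → ℂ)
    (hR : ∀ i j k l : Fin n,
      R i j k l = (1/2 : ℂ) * ∑ p : Fin n, A i k p * (starRingEnd ℂ) (A j l p)
        - (ε : ℂ) * (if k = j then 1 else 0) * (if i = l then 1 else 0)) :
    0 < (∑ i : Fin n, ∑ j : Fin n, ∑ k : Fin n, ∑ l : Fin n,
        R i j k l * (1 : Matrix (Fin n) (Fin n) ℂ) i j
          * (1 : Matrix (Fin n) (Fin n) ℂ) k l).re
    ∧ ∃ ξ : Matrix (Fin n) (Fin n) ℂ, ξ ≠ 0 ∧ ξ.PosSemidef ∧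
        0 < (∑ i : Fin n, ∑ j : Fin n, ∑ k : Fin n, ∑ l : Fin n,
          R i j k l * ξ i j * ξ k l).re := by
  obtain rfl : R = exampleCurvature A ε := funext fun i => funext fun j => funext fun k =>
    funext fun l => hR i j k l
  have hpos : 0 < (bisectionalForm (exampleCurvature A ε) 1).re := by
    rw [bisectionalForm_exampleCurvature_one, Fintype.card_fin]
    rw [lt_div_iff₀ (by positivity)] at hε'
    linarith
  have : NeZero n := ⟨by omega⟩
  exact ⟨hpos, 1, one_ne_zero, Matrix.PosSemidef.one, hpos⟩

/-- Example 2.2 (continued): for `A ≠ 0` and `0 < ε < |A|²/(2n)`, the real bisectional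
curvature form of the curvature tensor at the origin is strictly positive on the identity
matrix; in particular the real bisectional curvature is not nonpositive. -/
theorem example_RBC_not_nonpositive (n : ℕ) (hn : 1 ≤ n)
    (A : Fin n → Fin n → Fin n → ℂ) (hA : A ≠ 0) (ε : ℝ) (hε : 0 < ε)
    (hε' : ε < (∑ i : Fin n, ∑ k : Fin n, ∑ p : Fin n, ‖A i k p‖^2) / (2 * n))
    (R : Fin n → Fin n → Fin n → Fin n → ℂ)
    (hR : ∀ i j k l : Fin n,
      R i j k l = (1/2 : ℂ) * ∑ p : Fin n, A i k p * (starRingEnd ℂ) (A j l p)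
        - (ε : ℂ) * (if k = j then 1 else 0) * (if i = l then 1 else 0)) :
    0 < (∑ i : Fin n, ∑ j : Fin n, ∑ k : Fin n, ∑ l : Fin n,
        R i j k l * (1 : Matrix (Fin n) (Fin n) ℂ) i j
          * (1 : Matrix (Fin n) (Fin n) ℂ) k l).re
    ∧ ∃ ξ : Matrix (Fin n) (Fin n) ℂ, ξ ≠ 0 ∧ ξ.PosSemidef ∧
        0 < (∑ i : Fin n, ∑ j : Fin n, ∑ k : Fin n, ∑ l : Fin n,
          R i j k l * ξ i j * ξ k l).re :=
  example_RBC_not_nonpositive_general n hn A ε hε' R hR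
end
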